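/- If σ is an ownership graph, the edge (e, ρ) is in σ, and there exists an entity e' ≠ e with the edge (e', ρ) in σ, then σ \ {(e, ρ)} is an ownership graph. -/

import Mathlib

open Relation

variable {P R : Type*}

abbrev Entity (P R : Type*) := P ⊕ R

def EdgeRel (σ : Set (Entity P R × Entity P R)) (a b : Entity P R) : Prop := (a, b) ∈ σ

def Acyclic (σ : Set (Entity P R × Entity P R)) : Prop :=
  ∀ x : Entity P R, ¬ Relation.TransGen (EdgeRel σ) x x

def Appears (σ : Set (Entity P R × Entity P R)) (x : Entity P R) : Prop :=
  ∃ y : Entity P R, (x, y) ∈ σ ∨ (y, x) ∈ σ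

def IsOwnershipGraph (σ : Set (Entity P R × Entity P R)) : Prop :=
  (∀ (e : Entity P R) (p : P), (e, Sum.inl p) ∉ σ) ∧
  (∀ r : R, Appears σ (Sum.inr r) → ∃ e : Entity P R, (e, Sum.inr r) ∈ σ) ∧
  Acyclic σ

def root (σ : Set (Entity P R × Entity P R)) (x : Entity P R) : Set P :=
  {π : P | Relation.ReflTransGen (EdgeRel σ) (Sum.inl π) x}

def Fresh (σ : Set (Entity P R × Entity P R)) (x : Entity P R) : Prop :=
  ∀ y : Entity P R, (x, y) ∉ σ ∧ (y, x) ∉ σ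

theorem Acyclic.mono {σ τ : Set (Entity P R × Entity P R)} (hτσ : τ ⊆ σ) (h : Acyclic σ) :
    Acyclic τ :=
  fun x hx => h x (TransGen.mono (fun _ _ hab => hτσ hab) x x hx)

theorem Appears.mono {σ τ : Set (Entity P R × Entity P R)} (hτσ : τ ⊆ σ) {x : Entity P R}
    (h : Appears τ x) : Appears σ x :=
  let ⟨y, hy⟩ := h
  ⟨y, hy.imp (@hτσ _) (@hτσ _)⟩

theorem exists_owner_of_release {σ : Set (Entity P R × Entity P R)} {e : Entity P R} {ρ r : R}
    (hR : ∀ r : R, Appears σ (Sum.inr r) → ∃ e : Entity P R, (e, Sum.inr r) ∈ σ)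
    (hother : ∃ e' : Entity P R, e' ≠ e ∧ (e', Sum.inr ρ) ∈ σ)
    (hr : Appears (σ \ {(e, Sum.inr ρ)}) (Sum.inr r)) :
    ∃ o : Entity P R, (o, Sum.inr r) ∈ σ \ {(e, Sum.inr ρ)} := by
  rcases eq_or_ne r ρ with rfl | hrρ
  · obtain ⟨e', he'e, he'⟩ := hother
    exact ⟨e', he', fun heq => he'e (Prod.ext_iff.1 heq).1⟩
  · obtain ⟨o, ho⟩ := hR r (hr.mono Set.sdiff_subset)
    exact ⟨o, ho, fun heq => hrρ (Sum.inr_injective (Prod.ext_iff.1 heq).2)⟩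

theorem release_preserves_ownershipGraph_general (σ : Set (Entity P R × Entity P R)) (ρ : R)
    (e : Entity P R) (h : IsOwnershipGraph σ)
    (hother : ∃ e' : Entity P R, e' ≠ e ∧ (e', Sum.inr ρ) ∈ σ) :
    IsOwnershipGraph (σ \ {(e, Sum.inr ρ)}) := by
  obtain ⟨hP, hR, hA⟩ := h
  exact ⟨fun x p hx => hP x p hx.1, fun _ hr => exists_owner_of_release hR hother hr,
    hA.mono Set.sdiff_subset⟩

theorem release_preserves_ownershipGraph (σ : Set (Entity P R × Entity P R)) (ρ : R)
    (e : Entity P R) (h : IsOwnershipGraph σ) (he : (e, Sum.inr ρ) ∈ σ)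
    (hother : ∃ e' : Entity P R, e' ≠ e ∧ (e', Sum.inr ρ) ∈ σ) :
    IsOwnershipGraph (σ \ {(e, Sum.inr ρ)}) :=
  release_preserves_ownershipGraph_general σ ρ e h hother
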